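/- arXiv:1504.06149 — 3 statements merged into one kernel-verified Lean document; each statement's English description precedes it below -/
import Mathlib

section
/- Let M ≥ 1, k ≥ 1, r be natural numbers and let a ∈ ℝ^{(k+1)M} (0-indexed). For 0 ≤ m ≤ k define l_m ∈ ℝ^M by (l_m)_j = a_{mM+j}, and for 0 ≤ m ≤ k−1 define the M×M Hankel block H_m by (H_m)_{ij} = a_{mM+i+j} for 0 ≤ i, j ≤ M−1. Suppose u_0, …, u_{r−1} ∈ ℝ^M span the linear span of {l_m : 0 ≤ m ≤ k}, and let w_i ∈ ℝ^{M−1} be the truncation of u_i (its first M−1 components). Then every block H_m (0 ≤ m ≤ k−1) lies in the linear span of the 2r matrices L(u_0), …, L(u_{r−1}), R(w_0), …, R(w_{r−1}). -/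
/-- The anti-upper-triangular Hankel matrix `[v^T, 0]_H`. -/
def hankelL (M : ℕ) (v : Fin M → ℝ) : Matrix (Fin M) (Fin M) ℝ :=
  fun i j => if h : (i : ℕ) + (j : ℕ) < M then v ⟨(i : ℕ) + (j : ℕ), h⟩ else 0

/-- The anti-lower-triangular Hankel matrix `[0^T, w]_H`. -/
def hankelR (M : ℕ) (w : Fin (M - 1) → ℝ) : Matrix (Fin M) (Fin M) ℝ :=
  fun i j =>
    if h : M ≤ (i : ℕ) + (j : ℕ) then
      w ⟨(i : ℕ) + (j : ℕ) - M, by have hi := i.isLt; have hj := j.isLt; omega⟩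
    else 0

/-- Truncation of a vector in `ℝ^M` to its first `M-1` components. -/
def trunc (M : ℕ) (v : Fin M → ℝ) : Fin (M - 1) → ℝ :=
  fun j => v (Fin.castLE (Nat.sub_le M 1) j)

def hankelLlin (M : ℕ) : (Fin M → ℝ) →ₗ[ℝ] Matrix (Fin M) (Fin M) ℝ where
  toFun := hankelL M
  map_add' v w := by
    funext i j
    simp only [hankelL, Matrix.add_apply]
    split <;> simp
  map_smul' c v := by
    funext i j
    simp only [hankelL, Matrix.smul_apply, RingHom.id_apply]
    split <;> simp

def hankelRTlin (M : ℕ) : (Fin M → ℝ) →ₗ[ℝ] Matrix (Fin M) (Fin M) ℝ where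
  toFun v := hankelR M (trunc M v)
  map_add' v w := by
    funext i j
    simp only [hankelR, trunc, Matrix.add_apply, Pi.add_apply]
    split <;> simp
  map_smul' c v := by
    funext i j
    simp only [hankelR, trunc, Matrix.smul_apply, RingHom.id_apply, Pi.smul_apply]
    split <;> simp

lemma mem_span_of_mem_span_u (M r : ℕ) (u : Fin r → (Fin M → ℝ))
    (f : (Fin M → ℝ) →ₗ[ℝ] Matrix (Fin M) (Fin M) ℝ) (v : Fin M → ℝ)
    (hv : v ∈ Submodule.span ℝ (Set.range u)) :
    f v ∈ Submodule.span ℝ (Set.range (fun i => f (u i))) := by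
  have : f v ∈ Submodule.map f (Submodule.span ℝ (Set.range u)) := ⟨v, hv, rfl⟩
  rwa [Submodule.map_span, ← Set.range_comp] at this

/-- Theorem 1: every Hankel block `H_m` of the long convolution array `a` lies in the
linear span of the `2r` matrices `L(u_0), …, L(u_{r-1}), R(w_0), …, R(w_{r-1})`,
where the `u_i` span the span of the subvectors `l_m` of `a` and `w_i` is
the truncation of `u_i`. -/
theorem hankel_blocks_in_span (M k r : ℕ) (hM : 1 ≤ M) (hk : 1 ≤ k)
    (a : Fin ((k + 1) * M) → ℝ)
    (l : Fin (k + 1) → (Fin M → ℝ))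
    (hl : ∀ (m : Fin (k + 1)) (j : Fin M),
      l m j = a ⟨(m : ℕ) * M + (j : ℕ), by
        have hm := m.isLt; have hj := j.isLt
        calc (m : ℕ) * M + (j : ℕ) < ((m : ℕ) + 1) * M := by
              rw [add_mul, one_mul]; omega
          _ ≤ (k + 1) * M := Nat.mul_le_mul_right M (by omega)⟩)
    (H : Fin k → Matrix (Fin M) (Fin M) ℝ)
    (hH : ∀ (m : Fin k) (i j : Fin M),
      H m i j = a ⟨(m : ℕ) * M + (i : ℕ) + (j : ℕ), by
        have hm := m.isLt; have hi := i.isLt; have hj := j.isLt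
        calc (m : ℕ) * M + (i : ℕ) + (j : ℕ) < ((m : ℕ) + 2) * M := by
              rw [add_mul]; omega
          _ ≤ (k + 1) * M := Nat.mul_le_mul_right M (by omega)⟩)
    (u : Fin r → (Fin M → ℝ))
    (hu_span : Submodule.span ℝ (Set.range u) = Submodule.span ℝ (Set.range l)) :
    ∀ m : Fin k,
      H m ∈ Submodule.span ℝ
        (Set.range (fun i => hankelL M (u i)) ∪
          Set.range (fun i => hankelR M (trunc M (u i)))) := by
  intro m
  have hdecomp : H m = hankelL M (l m.castSucc) + hankelR M (trunc M (l m.succ)) := by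
    funext i j
    rw [hH, Matrix.add_apply]
    rcases lt_or_ge ((i : ℕ) + (j : ℕ)) M with h | h
    · rw [hankelL, hankelR]
      rw [dif_pos h, dif_neg (by omega), add_zero, hl]
      congr 1
      apply Fin.ext
      simp [Fin.coe_castSucc]
      omega
    · rw [hankelL, hankelR]
      rw [dif_neg (by omega), dif_pos h, zero_add, trunc, hl]
      congr 1
      apply Fin.ext
      have hi := i.isLt; have hj := j.isLt
      simp only [Fin.val_succ, Fin.coe_castLE, add_mul, one_mul]
      omega
  have hmem0 : l m.castSucc ∈ Submodule.span ℝ (Set.range u) := by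
    rw [hu_span]; exact Submodule.subset_span ⟨m.castSucc, rfl⟩
  have hmem1 : l m.succ ∈ Submodule.span ℝ (Set.range u) := by
    rw [hu_span]; exact Submodule.subset_span ⟨m.succ, rfl⟩
  have h1 := mem_span_of_mem_span_u M r u (hankelLlin M) _ hmem0
  have h2 := mem_span_of_mem_span_u M r u (hankelRTlin M) _ hmem1
  rw [hdecomp]
  refine Submodule.add_mem _ ?_ ?_
  · exact Submodule.span_mono Set.subset_union_left h1
  · exact Submodule.span_mono Set.subset_union_right h2
end

section
/- Let n ≥ 1 be a natural number, let δt > 0, λ > 0, β > 0 be real numbers, and let w_0, …, w_n ≥ 0 be real weights. Define sequences (β_k), (γ_k) downward by β_n = β and, for k = n, n−1, …, 1: γ_k = β_k + w_k · δt/(1+(n−k)δt) and β_{k−1} = λγ_k/(λ+γ_k). Define functions Ψ_k : ℝ → ℝ recursively by Ψ_{n+1}(x) = √(β/π) e^{−βx²} and, for k = n, n−1, …, 1, Ψ_k(x) = √(λ/π) ∫_ℝ Ψ_{k+1}(x+ξ) · e^{−w_k (x+ξ)² δt/(1+(n−k)δt)} · e^{−λξ²} dξ. Then all β_k and γ_k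 are strictly positive, and for every 1 ≤ k ≤ n and every x ∈ ℝ, Ψ_k(x) = Γ_k · √(β_{k−1}/π) · e^{−β_{k−1} x²}, where Γ_k = ∏_{j=k}^{n} √(β_j/γ_j). -/
open MeasureTheory

lemma gauss_conv (a b x : ℝ) (ha : 0 < a) (hb : 0 < b) :
    (∫ ξ : ℝ, Real.exp (-(a * (x + ξ) ^ 2 + b * ξ ^ 2))) =
      Real.sqrt (Real.pi / (a + b)) * Real.exp (-(a * b / (a + b)) * x ^ 2) := by
  have hab : (0:ℝ) < a + b := by linarith
  have key : ∀ ξ : ℝ, -(a * (x + ξ) ^ 2 + b * ξ ^ 2)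
      = -((a + b) * (ξ + a * x / (a + b)) ^ 2) + -(a * b / (a + b)) * x ^ 2 := by
    intro ξ
    field_simp
    ring
  have h1 : (∫ ξ : ℝ, Real.exp (-(a * (x + ξ) ^ 2 + b * ξ ^ 2)))
      = (∫ ξ : ℝ, Real.exp (-((a + b) * (ξ + a * x / (a + b)) ^ 2)))
        * Real.exp (-(a * b / (a + b)) * x ^ 2) := by
    rw [← integral_mul_const]
    congr 1
    funext ξ
    rw [← Real.exp_add, key ξ]
  have h2 := integral_add_right_eq_self (μ := volume)
    (fun u : ℝ => Real.exp (-((a + b) * u ^ 2))) (a * x / (a + b))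
  rw [h1, h2]
  simp_rw [← neg_mul]
  rw [integral_gaussian]

/-- Closed-form solution of the discretized Feynman–Kac iteration for the
harmonic-oscillator dissipation rate `V(x,t) = x²/(t+1)` with Gaussian initial
distribution: each iterate `Ψ_k` is an explicit Gaussian
`Γ_k √(β_{k-1}/π) e^{-β_{k-1} x²}`, and all `β_k`, `γ_k` are positive. -/
theorem harmonic_oscillator_solution (n : ℕ) (hn : 1 ≤ n)
    (δt lam β : ℝ) (hδt : 0 < δt) (hlam : 0 < lam) (hβ : 0 < β)
    (w : ℕ → ℝ) (hw : ∀ k ≤ n, 0 ≤ w k)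
    (B G : ℕ → ℝ)
    (hBn : B n = β)
    (hG : ∀ k, 1 ≤ k → k ≤ n →
      G k = B k + w k * (δt / (1 + ((n - k : ℕ) : ℝ) * δt)))
    (hB : ∀ k, 1 ≤ k → k ≤ n → B (k - 1) = lam * G k / (lam + G k))
    (Ψ : ℕ → ℝ → ℝ)
    (hΨtop : ∀ x : ℝ, Ψ (n + 1) x = Real.sqrt (β / Real.pi) * Real.exp (-β * x ^ 2))
    (hΨ : ∀ k, 1 ≤ k → k ≤ n → ∀ x : ℝ,
      Ψ k x = Real.sqrt (lam / Real.pi) *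
        ∫ ξ : ℝ,
          Ψ (k + 1) (x + ξ) *
            Real.exp (-(w k) * (x + ξ) ^ 2 * δt / (1 + ((n - k : ℕ) : ℝ) * δt)) *
            Real.exp (-lam * ξ ^ 2)) :
    (∀ k ≤ n, 0 < B k) ∧
      (∀ k, 1 ≤ k → k ≤ n → 0 < G k) ∧
      ∀ k, 1 ≤ k → k ≤ n → ∀ x : ℝ,
        Ψ k x = (∏ j ∈ Finset.Icc k n, Real.sqrt (B j / G j)) *
          (Real.sqrt (B (k - 1) / Real.pi) * Real.exp (-(B (k - 1)) * x ^ 2)) := by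
  have hDpos : ∀ k : ℕ, (0:ℝ) < 1 + ((n - k : ℕ) : ℝ) * δt := by
    intro k
    have : (0:ℝ) ≤ ((n - k : ℕ) : ℝ) := Nat.cast_nonneg _
    nlinarith
  -- positivity of B, downward
  have hBpos0 : ∀ j, j ≤ n → 0 < B (n - j) := by
    intro j
    induction j with
    | zero => intro _; simpa [hBn] using hβ
    | succ m ih =>
      intro hm
      have hk1 : 1 ≤ n - m := by omega
      have hkn : n - m ≤ n := by omega
      have hBk : 0 < B (n - m) := ih (by omega)
      have hGk : 0 < G (n - m) := by
        rw [hG _ hk1 hkn]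
        have hwk : 0 ≤ w (n - m) := hw _ hkn
        have := hDpos (n - m)
        have hdd : 0 ≤ δt / (1 + ((n - (n - m) : ℕ) : ℝ) * δt) :=
          div_nonneg hδt.le (hDpos (n - m)).le
        nlinarith
      have : B (n - m - 1) = lam * G (n - m) / (lam + G (n - m)) := hB _ hk1 hkn
      have hpos : 0 < lam * G (n - m) / (lam + G (n - m)) := by positivity
      have heq : n - (m + 1) = n - m - 1 := by omega
      rw [heq, this]
      exact hpos
  have hBpos : ∀ k ≤ n, 0 < B k := by
    intro k hk
    have := hBpos0 (n - k) (by omega)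
    rwa [Nat.sub_sub_self hk] at this
  have hGpos : ∀ k, 1 ≤ k → k ≤ n → 0 < G k := by
    intro k hk1 hkn
    rw [hG k hk1 hkn]
    have hwk : 0 ≤ w k := hw k hkn
    have hdd : 0 ≤ δt / (1 + ((n - k : ℕ) : ℝ) * δt) := div_nonneg hδt.le (hDpos k).le
    have := hBpos k hkn
    nlinarith
  -- the one-step computation
  have step : ∀ k, 1 ≤ k → k ≤ n →
      (∀ y : ℝ, Ψ (k + 1) y =
        (∏ j ∈ Finset.Icc (k + 1) n, Real.sqrt (B j / G j)) *
          (Real.sqrt (B k / Real.pi) * Real.exp (-(B k) * y ^ 2))) →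
      ∀ x : ℝ, Ψ k x = (∏ j ∈ Finset.Icc k n, Real.sqrt (B j / G j)) *
          (Real.sqrt (B (k - 1) / Real.pi) * Real.exp (-(B (k - 1)) * x ^ 2)) := by
    intro k hk1 hkn hIH x
    have hBk : 0 < B k := hBpos k hkn
    have hGk : 0 < G k := hGpos k hk1 hkn
    have hGeq := hG k hk1 hkn
    set C := ∏ j ∈ Finset.Icc (k + 1) n, Real.sqrt (B j / G j) with hC
    set s := Real.sqrt (B k / Real.pi) with hs
    -- pointwise rewriting of the integrand
    have hpt : ∀ ξ : ℝ,
        Ψ (k + 1) (x + ξ) *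
          Real.exp (-(w k) * (x + ξ) ^ 2 * δt / (1 + ((n - k : ℕ) : ℝ) * δt)) *
          Real.exp (-lam * ξ ^ 2)
        = (C * s) * Real.exp (-(G k * (x + ξ) ^ 2 + lam * ξ ^ 2)) := by
      intro ξ
      rw [hIH (x + ξ)]
      have hexp : Real.exp (-(B k) * (x + ξ) ^ 2) *
          Real.exp (-(w k) * (x + ξ) ^ 2 * δt / (1 + ((n - k : ℕ) : ℝ) * δt)) *
          Real.exp (-lam * ξ ^ 2)
          = Real.exp (-(G k * (x + ξ) ^ 2 + lam * ξ ^ 2)) := by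
        rw [← Real.exp_add, ← Real.exp_add]
        congr 1
        rw [hGeq]
        ring
      rw [← hexp]
      ring
    have hint : (∫ ξ : ℝ,
        Ψ (k + 1) (x + ξ) *
          Real.exp (-(w k) * (x + ξ) ^ 2 * δt / (1 + ((n - k : ℕ) : ℝ) * δt)) *
          Real.exp (-lam * ξ ^ 2))
        = (C * s) * ∫ ξ : ℝ, Real.exp (-(G k * (x + ξ) ^ 2 + lam * ξ ^ 2)) := by
      rw [← integral_const_mul]
      congr 1
      funext ξ
      exact hpt ξ
    rw [hΨ k hk1 hkn x, hint, gauss_conv (G k) lam x hGk hlam]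
    -- product splitting
    have hIcc : Finset.Icc k n = insert k (Finset.Icc (k + 1) n) := by
      ext j
      simp only [Finset.mem_Icc, Finset.mem_insert]
      omega
    have hnotmem : k ∉ Finset.Icc (k + 1) n := by simp
    rw [hIcc, Finset.prod_insert hnotmem, ← hC]
    rw [hB k hk1 hkn]
    have hE : Real.exp (-(G k * lam / (G k + lam)) * x ^ 2)
        = Real.exp (-(lam * G k / (lam + G k)) * x ^ 2) := by
      congr 1
      rw [show G k + lam = lam + G k from add_comm _ _]
      ring
    have hS : (0:ℝ) < lam + G k := by linarith
    have hscal : Real.sqrt (lam / Real.pi) * (s * Real.sqrt (Real.pi / (G k + lam)))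
        = Real.sqrt (B k / G k) * Real.sqrt (lam * G k / (lam + G k) / Real.pi) := by
      rw [hs, ← Real.sqrt_mul (by positivity), ← Real.sqrt_mul (by positivity),
        ← Real.sqrt_mul (by positivity)]
      congr 1
      rw [show G k + lam = lam + G k from add_comm _ _]
      field_simp
    rw [hE]
    linear_combination (C * Real.exp (-(lam * G k / (lam + G k)) * x ^ 2)) * hscal
  -- downward induction
  have main : ∀ m, ∀ k, 1 ≤ k → k + m = n → ∀ x : ℝ,
      Ψ k x = (∏ j ∈ Finset.Icc k n, Real.sqrt (B j / G j)) *
        (Real.sqrt (B (k - 1) / Real.pi) * Real.exp (-(B (k - 1)) * x ^ 2)) := by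
    intro m
    induction m with
    | zero =>
      intro k hk1 hkn x
      have hkEq : k = n := by omega
      subst hkEq
      refine step k hk1 le_rfl ?_ x
      intro y
      rw [hΨtop y, hBn, Finset.Icc_eq_empty (by omega), Finset.prod_empty, one_mul]
    | succ m ih =>
      intro k hk1 hkn x
      refine step k hk1 (by omega) ?_ x
      intro y
      have := ih (k + 1) (by omega) (by omega) y
      simpa using this
  refine ⟨hBpos, hGpos, ?_⟩
  intro k hk1 hkn x
  exact main (n - k) k hk1 (by omega) x
end

section
/- Let A be an n×m real matrix of rank r ≥ 1. Then there exist index sets Î ⊆ {1, …, n} and Ĵ ⊆ {1, …, m} with |Î| = |Ĵ| = r such that the r×r submatrix Â = A(Î, Ĵ) is invertible and A = B Â^{−1} C^T, where B = A(:, Ĵ) is the n×r matrix formed by the columns of A indexed by Ĵ and C^T = A(Î, :) is the r×m matrix formed by the rows of A indexed by Î. In other words, every rank-r matrix admits a skeleton (cross) decomposition through a nonsingular r×r submatrix built from r of its rows and r of its columns. -/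
/-!
Pick `r` columns `Ĵ` of `A` forming a basis of its column space. The `n × r` matrix
`B = A(:, Ĵ)` then has rank `r`, so it has `r` linearly independent rows `Î`, and
`Â = A(Î, Ĵ)` is nonsingular. Since the columns of `B` span those of `A`, `A = B X` for
some `X`; restricting to the rows `Î` gives `A(Î, :) = Â X`, i.e. `X = Â⁻¹ A(Î, :)`.
-/

open Submodule

namespace Matrix

variable {K : Type*} [Field K] {m n : Type*}

theorem exists_linearIndependent_cols_span_eq [Fintype n] (A : Matrix m n K) {r : ℕ}
    (hr : A.rank = r) :
    ∃ κ : Fin r → n, LinearIndependent K (A.col ∘ κ) ∧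
      span K (Set.range (A.col ∘ κ)) = span K (Set.range A.col) := by
  obtain ⟨s, a, ha, hspan, hli⟩ := exists_linearIndependent' K A.col
  have : Finite s := Finite.of_injective a ha
  have : Fintype s := Fintype.ofFinite s
  have hcard : Fintype.card s = r := by
    rw [← hr, rank_eq_finrank_span_cols, ← hspan, finrank_span_eq_card hli]
  let e := Fintype.equivFinOfCardEq hcard
  refine ⟨a ∘ e.symm, hli.comp _ e.symm.injective, ?_⟩
  rw [← hspan, ← Function.comp_assoc, Set.range_comp, e.symm.range_eq_univ, Set.image_univ]

theorem exists_eq_mul_of_span_cols_le {k : Type*} [Fintype k] {A : Matrix m n K}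
    {B : Matrix m k K} (h : span K (Set.range A.col) ≤ span K (Set.range B.col)) :
    ∃ X : Matrix k n K, A = B * X := by
  have hcol (j : n) : ∃ x, B *ᵥ x = A.col j := by
    have hj := h (subset_span ⟨j, rfl⟩)
    rwa [← range_mulVecLin] at hj
  choose x hx using hcol
  refine ⟨of fun l j => x j l, ?_⟩
  ext i j
  exact (congrFun (hx j) i).symm

theorem injective_of_isUnit_submatrix {k : Type*} [Fintype k] [DecidableEq k] {A : Matrix m n K}
    {ι : k → m} {κ : k → n} (h : IsUnit (A.submatrix ι κ)) :
    Function.Injective ι ∧ Function.Injective κ :=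
  ⟨(linearIndependent_rows_iff_isUnit.mpr h).injective.of_comp (f := fun i c => A i (κ c)),
    (linearIndependent_cols_iff_isUnit.mpr h).injective.of_comp (f := fun j c => A (ι c) j)⟩

theorem exists_isUnit_submatrix_of_linearIndependent_cols [Fintype m] {r : ℕ}
    {B : Matrix m (Fin r) K} (h : LinearIndependent K B.col) :
    ∃ ι : Fin r → m, IsUnit (B.submatrix ι id) := by
  have hrank : Bᵀ.rank = r := by
    rw [LinearIndependent.rank_matrix (M := Bᵀ) h, Fintype.card_fin]
  obtain ⟨ι, hli, -⟩ := Bᵀ.exists_linearIndependent_cols_span_eq hrank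
  exact ⟨ι, linearIndependent_rows_iff_isUnit.mp hli⟩

theorem eq_submatrix_mul_inv_mul_of_span_cols_le {k : Type*} [Fintype k] [DecidableEq k]
    {A : Matrix m n K} {ι : k → m} {κ : k → n}
    (hspan : span K (Set.range A.col) ≤ span K (Set.range (A.col ∘ κ)))
    (hunit : IsUnit (A.submatrix ι κ)) :
    A = A.submatrix id κ * (A.submatrix ι κ)⁻¹ * A.submatrix ι id := by
  obtain ⟨X, hX⟩ := exists_eq_mul_of_span_cols_le (B := A.submatrix id κ) hspan
  have hrows : A.submatrix ι id = A.submatrix ι κ * X := by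
    conv_lhs => rw [hX]
    rw [submatrix_mul _ _ _ id _ Function.bijective_id, submatrix_id_id]
    rfl
  rw [hrows, Matrix.mul_assoc,
    nonsing_inv_mul_cancel_left _ _ ((isUnit_iff_isUnit_det _).mp hunit), ← hX]

end Matrix

theorem skeleton_decomposition_general (n m r : ℕ)
    (A : Matrix (Fin n) (Fin m) ℝ) (hrank : A.rank = r) :
    ∃ (ι : Fin r → Fin n) (κ : Fin r → Fin m),
      Function.Injective ι ∧ Function.Injective κ ∧
        IsUnit (A.submatrix ι κ) ∧
        A = A.submatrix id κ * (A.submatrix ι κ)⁻¹ * A.submatrix ι id := by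
  obtain ⟨κ, hκli, hκspan⟩ := A.exists_linearIndependent_cols_span_eq hrank
  obtain ⟨ι, hunit⟩ :=
    Matrix.exists_isUnit_submatrix_of_linearIndependent_cols (B := A.submatrix id κ) hκli
  rw [Matrix.submatrix_submatrix] at hunit
  obtain ⟨hι, hκ⟩ := Matrix.injective_of_isUnit_submatrix hunit
  exact ⟨ι, κ, hι, hκ, hunit,
    Matrix.eq_submatrix_mul_inv_mul_of_span_cols_le hκspan.ge hunit⟩

/-- Skeleton (cross) decomposition: every real `n × m` matrix of rank `r ≥ 1` can be
written as `A = B Â⁻¹ Cᵀ`, where `Â` is a nonsingular `r × r` submatrix of `A` located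
at the intersection of `r` rows (indexed by `ι`) and `r` columns (indexed by `κ`),
`B` consists of those `r` columns of `A`, and `Cᵀ` consists of those `r` rows of `A`. -/
theorem skeleton_decomposition (n m r : ℕ) (hr : 1 ≤ r)
    (A : Matrix (Fin n) (Fin m) ℝ) (hrank : A.rank = r) :
    ∃ (ι : Fin r → Fin n) (κ : Fin r → Fin m),
      Function.Injective ι ∧ Function.Injective κ ∧
        IsUnit (A.submatrix ι κ) ∧
        A = A.submatrix id κ * (A.submatrix ι κ)⁻¹ * A.submatrix ι id :=
  skeleton_decomposition_general n m r A hrank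
end
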